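/- arXiv:2108.08944 — 7 statements merged into one kernel-verified Lean document; each statement's English description precedes it below -/
import Mathlib

section
/- Under the setup of reporting and response classes, if the population covariances Cov(U, τ) and Cov(O, τ) are both zero, then (1/N)Σ_i (Ỹ_i(1) − Ỹ_i(0)) = (1 − Ū − Ō)·τ̄; that is, the expected estimate is the true average treatment effect shrunk multiplicatively by factor (1 − Ū − Ō). -/
open Finset

/-- If `Cov(U,τ) = Cov(O,τ) = 0` in the population, the mean reported
difference equals `(1 − Ū − Ō)·τ̄`: multiplicative shrinkage toward zero. -/
theorem shrinkage_under_independence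
    (N : ℕ) (hN : 0 < N)
    (Y0 Y1 U O : Fin N → ℝ)
    (hY0 : ∀ i, Y0 i = 0 ∨ Y0 i = 1)
    (hY1 : ∀ i, Y1 i = 0 ∨ Y1 i = 1)
    (hU : ∀ i, U i = 0 ∨ U i = 1)
    (hO : ∀ i, O i = 0 ∨ O i = 1)
    (hUO : ∀ i, U i * O i = 0)
    (τ Yt1 Yt0 : Fin N → ℝ)
    (hτ : ∀ i, τ i = Y1 i - Y0 i)
    (hYt1 : ∀ i, Yt1 i = (1 - U i) * (1 - O i) * Y1 i + O i)
    (hYt0 : ∀ i, Yt0 i = (1 - U i) * (1 - O i) * Y0 i + O i)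
    (Ubar Obar τbar : ℝ)
    (hUbar : Ubar = (1 / (N : ℝ)) * ∑ i, U i)
    (hObar : Obar = (1 / (N : ℝ)) * ∑ i, O i)
    (hτbar : τbar = (1 / (N : ℝ)) * ∑ i, τ i)
    (hcovU : (1 / (N : ℝ)) * ∑ i, U i * τ i - Ubar * τbar = 0)
    (hcovO : (1 / (N : ℝ)) * ∑ i, O i * τ i - Obar * τbar = 0) :
    (1 / (N : ℝ)) * ∑ i, (Yt1 i - Yt0 i) = (1 - Ubar - Obar) * τbar := by
  have key : ∀ i, Yt1 i - Yt0 i = τ i - U i * τ i - O i * τ i := by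
    intro i
    have h := hUO i
    rw [hYt1 i, hYt0 i, hτ i]
    linear_combination (Y1 i - Y0 i) * h
  calc (1 / (N : ℝ)) * ∑ i, (Yt1 i - Yt0 i)
      = (1 / (N : ℝ)) * ∑ i, (τ i - U i * τ i - O i * τ i) := by
        congr 1; exact Finset.sum_congr rfl fun i _ => key i
    _ = (1 / (N : ℝ)) * ∑ i, τ i - (1 / (N : ℝ)) * ∑ i, U i * τ i
        - (1 / (N : ℝ)) * ∑ i, O i * τ i := by
        rw [Finset.sum_sub_distrib, Finset.sum_sub_distrib]; ring
    _ = τbar - Ubar * τbar - Obar * τbar := by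
        rw [← hτbar]; linarith [hcovU, hcovO]
    _ = (1 - Ubar - Obar) * τbar := by ring
end

section
/- Suppose there are no overreporters (O_i = 0 for all i) and that the underreporter indicator satisfies UI̅ = Ū·Ī·δ, UD̅ = Ū·D̄·δ, UA̅ = Ū·Ā·δ for a common δ with δ(1−N̄) = 1 (i.e., underreporting is equally frequent across the Decrease, Increase, and Always classes, and absent in the Never class). Then the bias equals −Ū·δ·(Ī − D̄) = −(Ū/(1−N̄))·τ̄. -/
/-- No overreporters, and underreporting equally frequent across the
Decrease, Increase and Always classes (common ratio `δ` with `δ(1−N̄) = 1`); then the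
bias `−UI̅ + UD̅` equals `−Ū·δ·(Ī − D̄) = −(Ū/(1−N̄))·τ̄`. -/
theorem bias_under_equal_underreporting
    (Ibar Dbar Nbar Abar Ubar δ τbar UIbar UDbar UAbar : ℝ)
    (hsum : Ibar + Dbar + Nbar + Abar = 1)
    (hNlt : Nbar < 1)
    (hUI : UIbar = Ubar * Ibar * δ)
    (hUD : UDbar = Ubar * Dbar * δ)
    (hUA : UAbar = Ubar * Abar * δ)
    (hδ : δ * (1 - Nbar) = 1)
    (hτ : τbar = Ibar - Dbar) :
    -UIbar + UDbar = -(Ubar * δ * (Ibar - Dbar)) ∧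
      -UIbar + UDbar = -((Ubar / (1 - Nbar)) * τbar) := by
  have hne : (1 - Nbar) ≠ 0 := by linarith
  have hδ' : δ = 1 / (1 - Nbar) := by field_simp; linarith [hδ]
  subst hUI hUD hτ hδ'
  constructor
  · ring
  · field_simp
    ring
end

section
/- Let ȳ₀, ȳ₁ ∈ (0,1) with ȳ₀ > ȳ₁, and let τ = ȳ₁ − ȳ₀ < 0. For x ∈ [0,1) let m₁(x) = (1−x)·ȳ₁, m₀(x) = (1−x)·ȳ₀, g(x) = m₁(x)(1−m₁(x)) + m₀(x)(1−m₀(x)), and f(x) = (1−x)·|τ| / sqrt(g(x)). Then f is strictly decreasing in x on [0, 1). -/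

private lemma aux_pos {s y : ℝ} (hs : 0 < s) (hs1 : s ≤ 1) (hy : 0 < y) (hy1 : y < 1) :
    0 < s * y * (1 - s * y) := by
  have h1 : s * y < 1 := by nlinarith
  have h2 : 0 < s * y := mul_pos hs hy
  nlinarith

/-- Underreporter-only standardized effect.  With
`m₁(x) = (1−x)·ȳ₁`, `m₀(x) = (1−x)·ȳ₀`, `g(x) = m₁(1−m₁) + m₀(1−m₀)`,
`τ = ȳ₁ − ȳ₀ < 0`, the function `f(x) = (1−x)·|τ| / √(g x)` is strictly
decreasing on `[0, 1)`. -/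
theorem standardized_effect_strict_anti_underreporting
    (y1 y0 : ℝ) (hy1 : 0 < y1 ∧ y1 < 1) (hy0 : 0 < y0 ∧ y0 < 1)
    (hlt : y1 < y0)
    (m1 m0 g f : ℝ → ℝ)
    (hm1 : ∀ x, m1 x = (1 - x) * y1)
    (hm0 : ∀ x, m0 x = (1 - x) * y0)
    (hg : ∀ x, g x = m1 x * (1 - m1 x) + m0 x * (1 - m0 x))
    (hf : ∀ x, f x = (1 - x) * |y1 - y0| / Real.sqrt (g x)) :
    StrictAntiOn f (Set.Ico (0 : ℝ) 1) := by
  obtain ⟨hy1a, hy1b⟩ := hy1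
  obtain ⟨hy0a, hy0b⟩ := hy0
  intro x hx y hy hxy
  simp only [Set.mem_Ico] at hx hy
  have hsx : 0 < 1 - x := by linarith [hx.2]
  have hsy : 0 < 1 - y := by linarith [hy.2]
  have hsx1 : 1 - x ≤ 1 := by linarith [hx.1]
  have hsy1 : 1 - y ≤ 1 := by linarith [hy.1]
  have hgx : 0 < g x := by
    rw [hg, hm1, hm0]
    have := aux_pos hsx hsx1 hy1a hy1b
    have := aux_pos hsx hsx1 hy0a hy0b
    linarith
  have hgy : 0 < g y := by
    rw [hg, hm1, hm0]
    have := aux_pos hsy hsy1 hy1a hy1b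
    have := aux_pos hsy hsy1 hy0a hy0b
    linarith
  have key : (1 - y) ^ 2 * g x < (1 - x) ^ 2 * g y := by
    rw [hg, hg, hm1, hm1, hm0, hm0]
    have hp : 0 < (1 - x) * (1 - y) * (y1 + y0) * (y - x) := by
      apply mul_pos
      · apply mul_pos (mul_pos hsx hsy); linarith
      · linarith
    nlinarith [hp]
  have hsq : (1 - y) * Real.sqrt (g x) < (1 - x) * Real.sqrt (g y) := by
    have h1 : ((1 - y) * Real.sqrt (g x)) ^ 2 < ((1 - x) * Real.sqrt (g y)) ^ 2 := by
      rw [mul_pow, mul_pow, Real.sq_sqrt hgx.le, Real.sq_sqrt hgy.le]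
      exact key
    exact lt_of_pow_lt_pow_left₀ 2 (by positivity) h1
  have hτ : 0 < |y1 - y0| := abs_pos.mpr (by linarith)
  rw [hf, hf, div_lt_div_iff₀ (Real.sqrt_pos.mpr hgy) (Real.sqrt_pos.mpr hgx)]
  nlinarith [mul_lt_mul_of_pos_right hsq hτ]
end

section
/- With only overreporters (Ū = 0) present, independence, and n_t = n_c, the absolute standardized effect |E(τ̂)|/√V = (1−Ō)(ȳ₀−ȳ₁)/√(m₁(1−m₁)+m₀(1−m₀)), with m_w = (1−Ō)ȳ_w + Ō, is strictly decreasing in Ō on [0,1), provided ȳ₀ > ȳ₁ and ȳ₀, ȳ₁ ∈ (0,1). -/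
/-- Overreporter-only standardized effect.  With
`m_w(Ō) = (1−Ō)·ȳ_w + Ō`, the absolute standardized effect
`f(Ō) = (1−Ō)(ȳ₀−ȳ₁)/√(m₁(1−m₁)+m₀(1−m₀))` is strictly decreasing on `[0,1)`. -/
theorem standardized_effect_strict_anti_overreporting
    (y1 y0 : ℝ) (hy1 : 0 < y1 ∧ y1 < 1) (hy0 : 0 < y0 ∧ y0 < 1)
    (hlt : y1 < y0)
    (m1 m0 f : ℝ → ℝ)
    (hm1 : ∀ x, m1 x = (1 - x) * y1 + x)
    (hm0 : ∀ x, m0 x = (1 - x) * y0 + x)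
    (hf : ∀ x, f x = (1 - x) * (y0 - y1) /
          Real.sqrt (m1 x * (1 - m1 x) + m0 x * (1 - m0 x))) :
    StrictAntiOn f (Set.Ico (0 : ℝ) 1) := by
  obtain ⟨hy1a, hy1b⟩ := hy1
  obtain ⟨hy0a, hy0b⟩ := hy0
  intro a ha b hb hab
  obtain ⟨ha0, ha1⟩ := ha
  obtain ⟨hb0, hb1⟩ := hb
  have key : ∀ x, m1 x * (1 - m1 x) + m0 x * (1 - m0 x)
      = (1 - x) * (y1 * (1 - y1) + y0 * (1 - y0) + x * ((1 - y1) ^ 2 + (1 - y0) ^ 2)) := by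
    intro x; rw [hm1, hm0]; ring
  have hga : 0 < y1 * (1 - y1) + y0 * (1 - y0) + a * ((1 - y1) ^ 2 + (1 - y0) ^ 2) := by
    nlinarith [mul_pos hy1a (by linarith : (0:ℝ) < 1 - y1),
      mul_pos hy0a (by linarith : (0:ℝ) < 1 - y0),
      mul_nonneg ha0 (by positivity : (0:ℝ) ≤ (1 - y1) ^ 2 + (1 - y0) ^ 2)]
  have hgb : 0 < y1 * (1 - y1) + y0 * (1 - y0) + b * ((1 - y1) ^ 2 + (1 - y0) ^ 2) := by
    nlinarith [mul_pos hy1a (by linarith : (0:ℝ) < 1 - y1),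
      mul_pos hy0a (by linarith : (0:ℝ) < 1 - y0),
      mul_nonneg hb0 (by positivity : (0:ℝ) ≤ (1 - y1) ^ 2 + (1 - y0) ^ 2)]
  have hDa : 0 < (1 - a) * (y1 * (1 - y1) + y0 * (1 - y0) + a * ((1 - y1) ^ 2 + (1 - y0) ^ 2)) :=
    mul_pos (by linarith) hga
  have hDb : 0 < (1 - b) * (y1 * (1 - y1) + y0 * (1 - y0) + b * ((1 - y1) ^ 2 + (1 - y0) ^ 2)) :=
    mul_pos (by linarith) hgb
  rw [hf a, hf b, key a, key b]
  have hsa := Real.sqrt_pos.mpr hDa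
  have hsb := Real.sqrt_pos.mpr hDb
  rw [div_lt_div_iff₀ hsb hsa]
  have hrhs : 0 ≤ (1 - a) * (y0 - y1) *
      Real.sqrt ((1 - b) * (y1 * (1 - y1) + y0 * (1 - y0) + b * ((1 - y1) ^ 2 + (1 - y0) ^ 2))) := by
    have : 0 ≤ (1 - a) * (y0 - y1) := by nlinarith
    exact mul_nonneg this hsb.le
  apply lt_of_pow_lt_pow_left₀ 2 hrhs
  have e1 : ((1 - b) * (y0 - y1) *
      Real.sqrt ((1 - a) * (y1 * (1 - y1) + y0 * (1 - y0) + a * ((1 - y1) ^ 2 + (1 - y0) ^ 2)))) ^ 2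
      = ((1 - b) * (y0 - y1)) ^ 2 *
        ((1 - a) * (y1 * (1 - y1) + y0 * (1 - y0) + a * ((1 - y1) ^ 2 + (1 - y0) ^ 2))) := by
    rw [mul_pow, Real.sq_sqrt hDa.le]
  have e2 : ((1 - a) * (y0 - y1) *
      Real.sqrt ((1 - b) * (y1 * (1 - y1) + y0 * (1 - y0) + b * ((1 - y1) ^ 2 + (1 - y0) ^ 2)))) ^ 2
      = ((1 - a) * (y0 - y1)) ^ 2 *
        ((1 - b) * (y1 * (1 - y1) + y0 * (1 - y0) + b * ((1 - y1) ^ 2 + (1 - y0) ^ 2))) := by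
    rw [mul_pow, Real.sq_sqrt hDb.le]
  rw [e1, e2]
  have hfact : 0 < (b - a) * (y1 * (1 - y1) + y0 * (1 - y0) + (1 - y1) ^ 2 + (1 - y0) ^ 2) := by
    apply mul_pos (by linarith)
    linarith [mul_pos hy1a (by linarith : (0:ℝ) < 1 - y1),
      mul_pos hy0a (by linarith : (0:ℝ) < 1 - y0), sq_nonneg (1 - y1), sq_nonneg (1 - y0)]
  have hprod := mul_pos (mul_pos (mul_pos (by linarith : (0:ℝ) < 1 - a)
      (by linarith : (0:ℝ) < 1 - b))
      (pow_pos (by linarith : (0:ℝ) < y0 - y1) 2)) hfact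
  have hid : ((1 - a) * (y0 - y1)) ^ 2 *
        ((1 - b) * (y1 * (1 - y1) + y0 * (1 - y0) + b * ((1 - y1) ^ 2 + (1 - y0) ^ 2)))
      - ((1 - b) * (y0 - y1)) ^ 2 *
        ((1 - a) * (y1 * (1 - y1) + y0 * (1 - y0) + a * ((1 - y1) ^ 2 + (1 - y0) ^ 2)))
      = (1 - a) * (1 - b) * (y0 - y1) ^ 2 *
        ((b - a) * (y1 * (1 - y1) + y0 * (1 - y0) + (1 - y1) ^ 2 + (1 - y0) ^ 2)) := by
    ring
  linarith
end

section
/- Dinkelbach's lemma: Let X be a nonempty compact set, f : X → ℝ continuous and g : X → ℝ continuous with g(x) > 0 for all x ∈ X. Define γ* = min_{x∈X} f(x)/g(x) and h(γ) = min_{x∈X} (f(x) − γ·g(x)). Then h(γ) = 0 if and only if γ = γ*. -/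
/-- Dinkelbach's lemma.  For `X` nonempty compact, `f, g` continuous on
`X` with `g > 0`, let `γ* = min_{x∈X} f(x)/g(x)` and `h(γ) = min_{x∈X} (f − γg)`.
Then `h(γ) = 0 ↔ γ = γstar`. -/
theorem dinkelbach_lemma
    {E : Type*} [TopologicalSpace E]
    (X : Set E) (hne : X.Nonempty) (hX : IsCompact X)
    (f g : E → ℝ)
    (hf : ContinuousOn f X) (hg : ContinuousOn g X)
    (hgpos : ∀ x ∈ X, 0 < g x)
    (γstar : ℝ)
    (hγstar : (∃ x ∈ X, f x / g x = γstar) ∧ ∀ x ∈ X, γstar ≤ f x / g x)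
    (h : ℝ → ℝ)
    (hh : ∀ γ, (∃ x ∈ X, f x - γ * g x = h γ) ∧ ∀ x ∈ X, h γ ≤ f x - γ * g x) :
    ∀ γ, h γ = 0 ↔ γ = γstar := by
  obtain ⟨⟨xs, hxs, hxs2⟩, hlb⟩ := hγstar
  intro γ
  constructor
  · intro h0
    obtain ⟨⟨x, hx, hx2⟩, hγlb⟩ := hh γ
    have hgx := hgpos x hx
    have h1 : γ = f x / g x := by field_simp; linarith
    have h2 : γstar ≤ γ := h1 ▸ hlb x hx
    -- other direction: 0 = h γ ≤ f xs - γ * g xs = (γstar - γ) * g xs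
    have h3 := hγlb xs hxs
    have hgxs := hgpos xs hxs
    have h4 : f xs = γstar * g xs := by
      field_simp at hxs2; linarith
    have h5 : 0 ≤ (γstar - γ) * g xs := by rw [sub_mul]; linarith
    have h6 : γ ≤ γstar := by nlinarith
    linarith
  · rintro rfl
    obtain ⟨⟨x, hx, hx2⟩, hγlb⟩ := hh γ
    have hgxs := hgpos xs hxs
    have h4 : f xs = γ * g xs := by
      field_simp at hxs2; linarith
    have h5 : h γ ≤ 0 := by have := hγlb xs hxs; linarith
    have h6 : 0 ≤ h γ := by
      rw [← hx2]
      have hgx := hgpos x hx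
      have := hlb x hx
      have : γ * g x ≤ f x := by
        have := (le_div_iff₀ hgx).mp this
        linarith
      linarith
    linarith
end

section
/- The function h(γ) = min_{x∈X} (f(x) − γ·g(x)), for X compact nonempty, f, g continuous and g > 0 on X, is strictly decreasing in γ and continuous; hence the equation h(γ) = 0 has a unique solution. -/
/-- The Dinkelbach value function
`h(γ) = min_{x∈X} (f(x) − γ·g(x))` (realized as the infimum over the image) is
strictly decreasing and continuous, and `h(γ) = 0` has a unique solution. -/
theorem dinkelbach_value_function_strict_anti_continuous
    {E : Type*} [TopologicalSpace E]
    (X : Set E) (hne : X.Nonempty) (hX : IsCompact X)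
    (f g : E → ℝ)
    (hf : ContinuousOn f X) (hg : ContinuousOn g X)
    (hgpos : ∀ x ∈ X, 0 < g x)
    (h : ℝ → ℝ)
    (hh : ∀ γ, h γ = sInf ((fun x => f x - γ * g x) '' X)) :
    StrictAnti h ∧ Continuous h ∧ ∃! γ, h γ = 0 := by
  have hφ : ∀ γ : ℝ, ContinuousOn (fun x => f x - γ * g x) X := fun γ =>
    hf.sub (continuousOn_const.mul hg)
  -- attainment of the minimum
  have key : ∀ γ : ℝ, ∃ x ∈ X, h γ = f x - γ * g x ∧ ∀ y ∈ X, h γ ≤ f y - γ * g y := by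
    intro γ
    obtain ⟨x, hxX, hxmin⟩ := hX.exists_isMinOn hne (hφ γ)
    have hbdd : BddBelow ((fun x => f x - γ * g x) '' X) :=
      (hX.image_of_continuousOn (hφ γ)).bddBelow
    have hmem : (f x - γ * g x) ∈ (fun x => f x - γ * g x) '' X := ⟨x, hxX, rfl⟩
    have heq : h γ = f x - γ * g x := by
      rw [hh γ]
      apply le_antisymm (csInf_le hbdd hmem)
      apply le_csInf ⟨_, hmem⟩
      rintro b ⟨y, hyX, rfl⟩
      exact hxmin hyX
    refine ⟨x, hxX, heq, fun y hyX => ?_⟩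
    rw [heq]; exact hxmin hyX
  -- strictly decreasing
  have hanti : StrictAnti h := by
    intro a b hab
    obtain ⟨x, hxX, hx1, _⟩ := key a
    obtain ⟨_, _, _, hy2⟩ := key b
    calc h b ≤ f x - b * g x := hy2 x hxX
      _ < f x - a * g x := by nlinarith [hgpos x hxX]
      _ = h a := hx1.symm
  -- maximum of g
  obtain ⟨z, hzX, hzmax⟩ := hX.exists_isMaxOn hne hg
  set M := g z with hM
  have hMpos : 0 < M := hgpos z hzX
  have hgleM : ∀ x ∈ X, g x ≤ M := fun x hx => hzmax hx
  have hlip : ∀ a b : ℝ, h a - h b ≤ M * |a - b| := by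
    intro a b
    obtain ⟨x, hxX, hx1, _⟩ := key b
    obtain ⟨_, _, _, hy2⟩ := key a
    have h1 : h a ≤ f x - a * g x := hy2 x hxX
    have h2 : h a - h b ≤ (b - a) * g x := by rw [hx1]; linarith
    have h3 : (b - a) ≤ |a - b| := by rw [abs_sub_comm]; exact le_abs_self _
    have h0 := (hgpos x hxX).le
    have h4 := hgleM x hxX
    nlinarith [abs_nonneg (a - b)]
  have hcont : Continuous h := by
    have hl : LipschitzWith (Real.toNNReal M) h := by
      apply LipschitzWith.of_dist_le_mul
      intro a b
      rw [Real.dist_eq, Real.dist_eq, Real.coe_toNNReal M hMpos.le, abs_sub_le_iff]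
      refine ⟨hlip a b, ?_⟩
      have := hlip b a
      rwa [abs_sub_comm] at this
    exact hl.continuous
  refine ⟨hanti, hcont, ?_⟩
  obtain ⟨x0, hx0⟩ := hne
  obtain ⟨w, hwX, hwmin⟩ := hX.exists_isMinOn ⟨x0, hx0⟩ hf
  obtain ⟨v, hvX, hvmin⟩ := hX.exists_isMinOn ⟨x0, hx0⟩ hg
  set m := g v with hm
  have hmpos : 0 < m := hgpos v hvX
  -- large γ gives negative value
  set b : ℝ := (f x0 + 1) / g x0 with hbdef
  have hbneg : h b < 0 := by
    obtain ⟨_, _, _, hy2⟩ := key b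
    have hgx0 := hgpos x0 hx0
    have : h b ≤ f x0 - b * g x0 := hy2 x0 hx0
    have hb0 : b * g x0 = f x0 + 1 := by
      rw [hbdef]; field_simp
    linarith
  -- small γ gives positive value
  set a : ℝ := -(|f w| + 1) / m with hadef
  have haneg : a < 0 := by
    apply div_neg_of_neg_of_pos _ hmpos
    have := abs_nonneg (f w); linarith
  have ham : a * m = -(|f w| + 1) := by
    rw [hadef]; field_simp
  have hapos : 0 < h a := by
    obtain ⟨y, hyX, hy1, _⟩ := key a
    have h1 : f w ≤ f y := hwmin hyX
    have h2 : m ≤ g y := hvmin hyX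
    have h3 : a * g y ≤ a * m := by nlinarith
    have h4 : -(|f w|) ≤ f w := neg_abs_le _
    rw [hy1]; nlinarith
  have hab : a < b := by
    by_contra hc
    push_neg at hc
    rcases eq_or_lt_of_le hc with heq | hlt
    · rw [heq] at hbneg; linarith
    · have := hanti hlt; linarith
  have hiv := intermediate_value_Icc' hab.le hcont.continuousOn
  have h0mem : (0 : ℝ) ∈ Set.Icc (h b) (h a) := ⟨hbneg.le, hapos.le⟩
  obtain ⟨γ, _, hγ⟩ := hiv h0mem
  exact ⟨γ, hγ, fun γ' hγ' => hanti.injective (by rw [hγ, hγ'])⟩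
end

section
/- If additionally D̄ = 0 (no units in the Decrease class), then all seven nonzero joint class fractions TI̅, TN̅, TA̅, OI̅, ON̅, UI̅, UA̅ are determined by the eight observable cell probabilities in the two 2×2 tables of (true, reported) outcomes under treatment and control. Specifically: UI̅+UA̅ and UA̅ (= UD̅+UA̅ since UD̅=0) are observed directly, giving UI̅; OI̅+ON̅ and ON̅ (= OD̅+ON̅) give OI̅; then TI̅+TA̅ = (TI̅+TA̅+OI̅) − OI̅, TA̅ = P(Y^(t)(0)=1,Y^(r)(0)=1), and TN̅ = P(Y^(t)(0)=0,Y^(r)(0)=0) − UI̅ − TI̅ are recovered by subtraction. -/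
/-- With no Decrease units (`D̄ = 0`), no false-tellers, `UN̅ = OA̅ = 0`,
the seven nonzero joint class fractions `(TI̅, TN̅, TA̅, OI̅, ON̅, UI̅, UA̅)` are
identified by the eight observable (true, reported) cell probabilities: the map from
fractions to cell probabilities is injective. -/
theorem joint_fractions_identified
    (TI TN TA OI ON UI UA TI' TN' TA' OI' ON' UI' UA' : ℝ)
    (hnn : 0 ≤ TI ∧ 0 ≤ TN ∧ 0 ≤ TA ∧ 0 ≤ OI ∧ 0 ≤ ON ∧ 0 ≤ UI ∧ 0 ≤ UA)
    (hnn' : 0 ≤ TI' ∧ 0 ≤ TN' ∧ 0 ≤ TA' ∧ 0 ≤ OI' ∧ 0 ≤ ON' ∧ 0 ≤ UI' ∧ 0 ≤ UA')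
    (hsum : TI + TN + TA + OI + ON + UI + UA = 1)
    (hsum' : TI' + TN' + TA' + OI' + ON' + UI' + UA' = 1)
    -- equality of the eight observable cell probabilities (treatment arm)
    (h11t : TI + TA + OI = TI' + TA' + OI')
    (h10t : UI + UA = UI' + UA')
    (h01t : ON = ON')
    (h00t : TN = TN')
    -- (control arm)
    (h11c : TA = TA')
    (h10c : UA = UA')
    (h01c : OI + ON = OI' + ON')
    (h00c : TI + TN + UI = TI' + TN' + UI') :
    TI = TI' ∧ TN = TN' ∧ TA = TA' ∧ OI = OI' ∧ ON = ON' ∧ UI = UI' ∧ UA = UA' := by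
  refine ⟨by linarith, by linarith, by linarith, by linarith, by linarith, by linarith, by linarith⟩
end
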